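/- arXiv:2005.04483 — 6 statements merged into one kernel-verified Lean document; each statement's English description precedes it below -/
import Mathlib

section
/- Let R be a Noetherian commutative ring and let I, J, K be ideals of R. Then there exists an integer t ≥ 1 such that (J + I^n K) : I = (J : I) + I^{n-1} K for every n ≥ t. -/
/-!
Pick generators `a₁, …, aₘ` of `I` and let `φ : R → (R/J)ᵐ`, `x ↦ (x aᵢ mod J)ᵢ`. With
`L = (K (R/J))ᵐ`, the ideal `(J + IⁿK) : I` is the preimage `φ⁻¹(Iⁿ L)` and `J : I` is `ker φ`.
Artin–Rees for the submodule `φ(R)` of the finitely generated module `(R/J)ᵐ` gives `c` with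
`φ⁻¹(Iⁿ L) = I^(n-c) φ⁻¹(I^c L) + ker φ` for `n ≥ c`, and for `n > c` the first summand lies in
`I^(n-c-1) (J + I^c K) ⊆ J + I^(n-1) K`.
-/

open Submodule

theorem Submodule.ideal_smul_pi_univ {R ι : Type*} [CommRing R] [Finite ι] {M : ι → Type*}
    [∀ i, AddCommGroup (M i)] [∀ i, Module R (M i)] (I : Ideal R) (p : ∀ i, Submodule R (M i)) :
    I • pi Set.univ p = pi Set.univ fun i => I • p i := by
  classical
  simp only [← iSup_map_single, smul_iSup, map_smul'']

theorem Ideal.exists_comap_pow_smul_eq {R M N : Type*} [CommRing R] [IsNoetherianRing R]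
    [AddCommGroup M] [Module R M] [AddCommGroup N] [Module R N] [Module.Finite R N]
    (I : Ideal R) (f : M →ₗ[R] N) (L : Submodule R N) :
    ∃ c, ∀ n ≥ c, (I ^ n • L).comap f = I ^ (n - c) • (I ^ c • L).comap f ⊔ LinearMap.ker f := by
  obtain ⟨c, hc⟩ := ((I.stableFiltration_stable L).inter_right
    (I.trivialFiltration f.range)).exists_pow_smul_eq_of_ge
  refine ⟨c, fun n hn => ?_⟩
  have artinRees : I ^ n • L ⊓ f.range = I ^ (n - c) • (I ^ c • L ⊓ f.range) := hc n hn
  calc (I ^ n • L).comap f = (I ^ n • L ⊓ f.range).comap f := by ext; simp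
    _ = ((I ^ (n - c) • (I ^ c • L).comap f).map f).comap f := by
        rw [artinRees, map_smul'', inf_comm, ← map_comap_eq]
    _ = _ := comap_map_eq _ _

theorem Ideal.le_colon_iff_mul_le {R : Type*} [CommRing R] {I P Q : Ideal R} :
    P ≤ Q.colon I ↔ I * P ≤ Q := by
  refine ⟨fun h => Ideal.mul_le.2 fun r hr s hs => ?_, fun h s hs => mem_colon.2 fun r hr => ?_⟩
  · simpa [mul_comm] using mem_colon.1 (h hs) r hr
  · simpa [mul_comm] using h (Ideal.mul_mem_mul hr hs)

theorem Ideal.comap_pi_mulRight_mkQ {R ι : Type*} [CommRing R] (J P : Ideal R) (a : ι → R) :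
    (Submodule.pi Set.univ fun _ => Submodule.map J.mkQ P : Submodule R (ι → R ⧸ J)).comap
        (LinearMap.pi fun i => J.mkQ ∘ₗ LinearMap.mulRight R (a i)) =
      (J ⊔ P).colon (Set.range a) := by
  ext x
  rw [← comap_map_mkQ]
  simp only [Submodule.mem_comap, Submodule.mem_pi, Set.mem_univ, true_implies, LinearMap.pi_apply,
    LinearMap.comp_apply, LinearMap.mulRight_apply, mem_colon, Set.forall_mem_range, smul_eq_mul]

theorem Ideal.pow_mul_colon_add_pow_mul_le {R : Type*} [CommRing R] (I J K : Ideal R) {c n : ℕ}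
    (h : c < n) : I ^ (n - c) * (J + I ^ c * K).colon I ≤ J + I ^ (n - 1) * K := by
  obtain ⟨m, rfl⟩ := Nat.exists_eq_add_of_lt h
  calc I ^ (c + m + 1 - c) * (J + I ^ c * K).colon I
      = I ^ m * (I * (J + I ^ c * K).colon I) := by
        rw [Nat.add_assoc, Nat.add_sub_cancel_left, pow_succ, mul_assoc]
    _ ≤ I ^ m * (J + I ^ c * K) := Ideal.mul_mono_right (Ideal.le_colon_iff_mul_le.1 le_rfl)
    _ = I ^ m * J + I ^ (c + m + 1 - 1) * K := by
        rw [mul_add, ← mul_assoc, ← pow_add, Nat.add_sub_cancel, add_comm m]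
    _ ≤ J + I ^ (c + m + 1 - 1) * K := sup_le_sup_right Ideal.mul_le_right _

/-- Let `R` be a Noetherian commutative ring and `I, J, K` ideals of `R`. Then there exists
`t ≥ 1` such that `(J + I^n K) : I = (J : I) + I^(n-1) K` for every `n ≥ t`. -/
theorem colon_add_pow_mul_eq
    {R : Type*} [CommRing R] [IsNoetherianRing R] (I J K : Ideal R) :
    ∃ t : ℕ, 1 ≤ t ∧
      ∀ n : ℕ, t ≤ n →
        (J + I ^ n * K).colon I = J.colon I + I ^ (n - 1) * K := by
  obtain ⟨m, a, ha⟩ := Submodule.fg_iff_exists_fin_generating_family.1 (IsNoetherian.noetherian I)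
  have colon_range : ∀ P : Ideal R, P.colon (Set.range a) = P.colon I := by
    intro P; rw [← ha, Submodule.colon_span]
  let φ : R →ₗ[R] Fin m → R ⧸ J := LinearMap.pi fun i => J.mkQ ∘ₗ LinearMap.mulRight R (a i)
  let L : Submodule R (Fin m → R ⧸ J) := Submodule.pi Set.univ fun _ => Submodule.map J.mkQ K
  have comap_eq : ∀ n, (I ^ n • L).comap φ = (J + I ^ n * K).colon I := by
    intro n
    rw [Submodule.ideal_smul_pi_univ]
    simp only [← map_smul'', smul_eq_mul]
    rw [Ideal.comap_pi_mulRight_mkQ, colon_range, Ideal.add_eq_sup]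
  have ker_eq : LinearMap.ker φ = J.colon I := by
    simpa [colon_range] using Ideal.comap_pi_mulRight_mkQ J ⊥ a
  obtain ⟨c, hc⟩ := I.exists_comap_pow_smul_eq φ L
  refine ⟨c + 1, Nat.le_add_left 1 c, fun n hn => le_antisymm ?_ ?_⟩
  · rw [← comap_eq, hc n (by omega), comap_eq, ker_eq, smul_eq_mul]
    exact sup_le ((Ideal.pow_mul_colon_add_pow_mul_le I J K hn).trans
      (sup_le_sup_right Ideal.le_colon _)) le_sup_left
  · refine sup_le (colon_mono le_sup_left subset_rfl) (Ideal.le_colon_iff_mul_le.2 ?_)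
    rw [← mul_assoc, ← pow_succ', Nat.sub_add_cancel (by omega)]
    exact le_sup_right
end

section
/- Let (R,m) be a Noetherian local ring and let J, K be ideals of R. Then J is weakly m-full (i.e. mJ : m = J) if and only if there exists an integer t such that J + K·m^n is weakly m-full (i.e. m(J + K·m^n) : m = J + K·m^n) for every n ≥ t. -/
/-!
Write `m` for the maximal ideal. If the ideals `J + K m^n` are eventually weakly `m`-full,
then `mJ : m ⊆ m(J + K m^n) : m = J + K m^n ⊆ J + m^n` for all large `n`, so `mJ : m ⊆ J`
by Krull's intersection theorem for `R/J`.

Conversely, choose generators `g₁, …, g_s` of `m` and let `ψ : R → (R/mJ)^s`,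
`x ↦ (x gᵢ mod mJ)ᵢ`. Its kernel is `mJ : m = J`, and the preimage of `m^n • (Km (R/mJ))^s`
is `(mJ + K m^(n+1)) : m`. The Artin–Rees lemma for the range of `ψ` gives `k` with
`(mJ + K m^(n+1)) : m ⊆ J + m^(n-k) ((mJ + K m^(k+1)) : m) ⊆ J + K m^n` for `n > k`.
-/

open IsLocalRing

namespace Submodule

variable {R : Type*} [CommRing R]

theorem smul_pi_univ {ι : Type*} [Finite ι] {φ : ι → Type*} [∀ i, AddCommGroup (φ i)]
    [∀ i, Module R (φ i)] (I : Ideal R) (p : ∀ i, Submodule R (φ i)) :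
    I • pi Set.univ p = pi Set.univ (fun i => I • p i) := by
  classical
  simp_rw [← iSup_map_single, smul_iSup, map_smul'']

theorem mk_mem_smul_top_iff {A L : Ideal R} {x : R} :
    A.mkQ x ∈ L • (⊤ : Submodule R (R ⧸ A)) ↔ x ∈ L ⊔ A := by
  rw [← mem_comap (f := A.mkQ), comap_smul_top_of_surjective _ _ A.mkQ_surjective, ker_mkQ,
    Ideal.smul_eq_mul, Ideal.mul_top]

end Submodule

namespace Ideal

variable {R : Type*} [CommRing R]

theorem le_colon_mul (I J : Ideal R) : J ≤ (I * J).colon I := fun x hx =>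
  Submodule.mem_colon.mpr fun s hs => by rw [smul_eq_mul, mul_comm x s]; exact mul_mem_mul hs hx

theorem mul_colon_le (I C : Ideal R) : I * C.colon I ≤ C :=
  mul_le.mpr fun r hr x hx => by rw [mul_comm]; exact Submodule.mem_colon.mp hx r hr

theorem toSpanSingleton_mkQ_mem_pi_smul_top_iff {ι : Type*} {A C : Ideal R} (g : ι → R)
    (x : R) :
    LinearMap.toSpanSingleton R (ι → R ⧸ A) (fun i => A.mkQ (g i)) x ∈
        Submodule.pi Set.univ (fun _ => C • (⊤ : Submodule R (R ⧸ A))) ↔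
      x ∈ (C ⊔ A).colon (Set.range g) := by
  simp only [Submodule.mem_pi, Set.mem_univ, true_implies, LinearMap.toSpanSingleton_apply,
    Pi.smul_apply, ← map_smul, Submodule.mk_mem_smul_top_iff, Submodule.mem_colon,
    Set.forall_mem_range]

theorem toSpanSingleton_mkQ_eq_zero_iff {ι : Type*} {A : Ideal R} (g : ι → R) (x : R) :
    LinearMap.toSpanSingleton R (ι → R ⧸ A) (fun i => A.mkQ (g i)) x = 0 ↔
      x ∈ A.colon (Set.range g) := by
  simp only [funext_iff, LinearMap.toSpanSingleton_apply, Pi.smul_apply, Submodule.mkQ_apply,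
    ← Submodule.Quotient.mk_smul, Submodule.Quotient.mk_eq_zero, Pi.zero_apply,
    Submodule.mem_colon, Set.forall_mem_range]

theorem exists_colon_add_pow_mul_le [IsNoetherianRing R] (A B I L : Ideal R) :
    ∃ k, ∀ n, k ≤ n →
      (A + I ^ n * L).colon B ≤ A.colon B + I ^ (n - k) * (A + I ^ k * L).colon B := by
  obtain ⟨s, g, rfl⟩ :=
    Submodule.fg_iff_exists_fin_generating_family.mp (IsNoetherian.noetherian B)
  set ψ := LinearMap.toSpanSingleton R (Fin s → R ⧸ A) (fun i => A.mkQ (g i))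
  set W : Submodule R (Fin s → R ⧸ A) := Submodule.pi Set.univ (fun _ => L • ⊤)
  have comap_pow_smul (n : ℕ) :
      (I ^ n • W).comap ψ = (A + I ^ n * L).colon (span (Set.range g)) := by
    ext x
    rw [Submodule.mem_comap, Submodule.smul_pi_univ]
    simp_rw [← Submodule.smul_assoc, smul_eq_mul]
    rw [toSpanSingleton_mkQ_mem_pi_smul_top_iff, colon_span, sup_comm, Submodule.add_eq_sup]
  obtain ⟨k, hk⟩ := ((I.stableFiltration_stable W).inter_right
    (I.trivialFiltration (LinearMap.range ψ))).exists_pow_smul_eq_of_ge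
  refine ⟨k, fun n hn x hx => ?_⟩
  have hxk : ψ x ∈ I ^ (n - k) • (I ^ k • W ⊓ LinearMap.range ψ) := by
    change _ ∈
      I ^ (n - k) • (I.stableFiltration W ⊓ I.trivialFiltration (LinearMap.range ψ)).N k
    rw [← hk n hn]
    exact ⟨(comap_pow_smul n).ge hx, x, rfl⟩
  rw [inf_comm, ← Submodule.map_comap_eq, ← Submodule.map_smul'', comap_pow_smul] at hxk
  obtain ⟨u, hu, hux⟩ := hxk
  have hxu : x - u ∈ A.colon (span (Set.range g)) := by
    rw [colon_span, ← toSpanSingleton_mkQ_eq_zero_iff, map_sub, hux, sub_self]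
  simpa using Submodule.add_mem_sup hxu hu

theorem iInf_sup_pow_eq_of_le_jacobson [IsNoetherianRing R] (J : Ideal R) {I : Ideal R}
    (hI : I ≤ jacobson ⊥) : ⨅ n : ℕ, J ⊔ I ^ n = J := by
  refine le_antisymm (fun x hx => ?_) (le_iInf fun _ => le_sup_left)
  have : IsHausdorff I (R ⧸ J) := .of_le_jacobson I _ hI
  have hx0 : J.mkQ x = 0 := IsHausdorff.haus this _ fun n => by
    rw [SModEq.zero, Submodule.mk_mem_smul_top_iff, sup_comm]
    exact mem_iInf.mp hx n
  exact (Submodule.Quotient.mk_eq_zero J).mp hx0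

def IsWeaklyFull (J I : Ideal R) : Prop := (I * J).colon I = J

theorem IsWeaklyFull.exists_add_mul_pow [IsNoetherianRing R] {I J : Ideal R}
    (h : J.IsWeaklyFull I) (K : Ideal R) :
    ∃ t, ∀ n, t ≤ n → (J + K * I ^ n).IsWeaklyFull I := by
  obtain ⟨k, hk⟩ := exists_colon_add_pow_mul_le (I * J) I I (I * K)
  refine ⟨k + 1, fun n hn => le_antisymm ?_ (le_colon_mul _ _)⟩
  obtain ⟨d, rfl⟩ : ∃ d, n = k + 1 + d := Nat.exists_eq_add_of_le hn
  have hmul : I * (J + K * I ^ (k + 1 + d)) = I * J + I ^ (k + 1 + d) * (I * K) := by ring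
  calc (I * (J + K * I ^ (k + 1 + d))).colon I
      ≤ (I * J).colon I + I ^ (d + 1) * (I * J + I ^ k * (I * K)).colon I := by
        rw [hmul, ← show k + 1 + d - k = d + 1 by omega]; exact hk _ (by omega)
    _ ≤ J + I ^ d * (I * J + I ^ k * (I * K)) := by
        rw [h, pow_succ, mul_assoc]; exact sup_le_sup_left (mul_mono_right (mul_colon_le _ _)) J
    _ = J + I ^ (d + 1) * J + K * I ^ (k + 1 + d) := by ring
    _ ≤ J + K * I ^ (k + 1 + d) :=
        sup_le_sup_right (sup_le le_rfl mul_le_right) _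

theorem IsWeaklyFull.of_add_mul_pow [IsNoetherianRing R] {I J K : Ideal R}
    (hI : I ≤ jacobson ⊥) (t : ℕ) (h : ∀ n, t ≤ n → (J + K * I ^ n).IsWeaklyFull I) :
    J.IsWeaklyFull I := by
  refine le_antisymm ?_ (le_colon_mul _ _)
  refine (le_iInf fun n => ?_).trans (iInf_sup_pow_eq_of_le_jacobson J hI).le
  calc (I * J).colon I ≤ (I * (J + K * I ^ (n + t))).colon I :=
        Submodule.colon_mono (mul_mono_right le_sup_left) subset_rfl
    _ = J + K * I ^ (n + t) := h _ (Nat.le_add_left t n)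
    _ ≤ J ⊔ I ^ n :=
        sup_le_sup_left (mul_le_right.trans (Ideal.pow_le_pow_right (Nat.le_add_right n t))) J

end Ideal

/-- Let `(R,m)` be a Noetherian local ring and `J, K` ideals. Then `J` is weakly `m`-full
(`mJ : m = J`) iff there is `t` such that `J + K m^n` is weakly `m`-full for every `n ≥ t`. -/
theorem weakly_mfull_iff_weakly_mfull_add_eventually
    {R : Type*} [CommRing R] [IsLocalRing R] [IsNoetherianRing R] (J K : Ideal R) :
    (maximalIdeal R * J).colon (maximalIdeal R) = J ↔
      ∃ t : ℕ, ∀ n : ℕ, t ≤ n →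
        (maximalIdeal R * (J + K * maximalIdeal R ^ n)).colon (maximalIdeal R) =
          J + K * maximalIdeal R ^ n :=
  ⟨fun h => Ideal.IsWeaklyFull.exists_add_mul_pow h K,
    fun ⟨t, ht⟩ => Ideal.IsWeaklyFull.of_add_mul_pow (maximalIdeal_le_jacobson _) t ht⟩
end

section
/- Let (R,m) be a Noetherian local ring and let I, J be ideals of R such that Jm is not contained in Im. Then the ideal I + Jm is Burch, i.e. (I + Jm)m : m ≠ (I + Jm) : m. -/
/-!
If the two colon ideals agreed, then `J ≤ (I + Jm) : m` would give `Jm ≤ (I + Jm)m = Im + m(Jm)`,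
and Nakayama's lemma applied to the finitely generated ideal `Jm` would force `Jm ≤ Im`.
-/

open IsLocalRing

namespace Ideal

theorem le_colon_iff_mul_le_s9 {R : Type*} [CommSemiring R] {K L M : Ideal R} :
    K ≤ L.colon M ↔ K * M ≤ L :=
  ⟨fun h => mul_le.2 fun _ hk p hp => Submodule.mem_colon.1 (h hk) p hp,
    fun h _ hk => Submodule.mem_colon.2 fun _ hp => h (mul_mem_mul hk hp)⟩

theorem le_mul_of_le_add_mul {R : Type*} [CommRing R] {I N P : Ideal R} (hN : N.FG)
    (hP : P ≤ jacobson ⊥) (h : N ≤ (I + N) * P) : N ≤ I * P := by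
  refine Submodule.le_of_le_smul_of_le_jacobson_bot hN hP ?_
  rwa [smul_eq_mul, mul_comm P, ← sup_mul]

end Ideal

/-- Let `(R,m)` be a Noetherian local ring and `I, J` ideals with `Jm ⊄ Im`.
Then `I + Jm` is Burch, i.e. `(I + Jm)m : m ≠ (I + Jm) : m`. -/
theorem burch_of_not_le
    {R : Type*} [CommRing R] [IsLocalRing R] [IsNoetherianRing R] (I J : Ideal R)
    (h : ¬ J * maximalIdeal R ≤ I * maximalIdeal R) :
    ((I + J * maximalIdeal R) * maximalIdeal R).colon (maximalIdeal R) ≠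
      (I + J * maximalIdeal R).colon (maximalIdeal R) := by
  intro heq
  have hJ : J ≤ ((I + J * maximalIdeal R) * maximalIdeal R).colon (maximalIdeal R) := by
    rw [heq]
    exact Ideal.le_colon_iff_mul_le_s9.2 le_sup_right
  exact h <| Ideal.le_mul_of_le_add_mul (IsNoetherian.noetherian _)
    (jacobson_eq_maximalIdeal ⊥ bot_ne_top).ge (Ideal.le_colon_iff_mul_le_s9.1 hJ)
end

section
/- Let (R,m) be a Noetherian local ring and let I, J be proper ideals of R such that the Krull dimension of R/I is positive and the Krull dimension of R/J is zero. Then the ideal I + Jm is Burch, i.e. (I + Jm)m : m ≠ (I + Jm) : m. -/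
/-!
If `K = I + J m` were not Burch, then `J ≤ K : m = K m : m`, so `J m ≤ K m ≤ I + m (J m)` and
Nakayama gives `J m ≤ I`. As `J` is `m`-primary, some `m ^ n ≤ J`, hence `m ^ (n + 1) ≤ I` and
`I` is `m`-primary too, contradicting `dim R/I > 0`.
-/

open IsLocalRing

namespace Ideal

variable {R : Type*} [CommRing R]

theorem le_colon_iff_mul_le_s10 {I J K : Ideal R} : J ≤ K.colon I ↔ J * I ≤ K := by
  rw [Ideal.mul_le]
  simp only [SetLike.le_def, Submodule.mem_colon, smul_eq_mul, SetLike.mem_coe]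

variable [IsLocalRing R]

def IsBurch (I : Ideal R) : Prop :=
  (I * maximalIdeal R).colon (maximalIdeal R) ≠ I.colon (maximalIdeal R)

theorem mul_maximalIdeal_le_of_not_isBurch [IsNoetherianRing R] {I J : Ideal R}
    (h : ¬ (I + J * maximalIdeal R).IsBurch) : J * maximalIdeal R ≤ I := by
  set m := maximalIdeal R
  have hJm : J * m ≤ (I + J * m) * m := by
    rw [← le_colon_iff_mul_le_s10, not_ne_iff.mp h, le_colon_iff_mul_le_s10]
    exact le_sup_right
  refine Submodule.le_of_le_smul_of_le_jacobson_bot (IsNoetherian.noetherian _)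
    (jacobson_eq_maximalIdeal ⊥ bot_ne_top).ge (hJm.trans ?_)
  rw [add_mul, smul_eq_mul, mul_comm m]
  exact sup_le_sup_right mul_le_left _

theorem ringKrullDim_quotient_nonpos_iff (I : Ideal R) :
    ringKrullDim (R ⧸ I) ≤ 0 ↔ maximalIdeal R ≤ I.radical := by
  rw [← Nat.cast_zero, ← Ring.krullDimLE_iff,
    krullDimLE_zero_quotient_iff_forall_minimalPrimes_isMaximal, ← sInf_minimalPrimes]
  simp only [IsLocalRing.isMaximal_iff, le_sInf_iff]
  refine forall₂_congr fun P hP => ⟨Eq.ge, fun h => ?_⟩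
  exact ((maximalIdeal.isMaximal R).eq_of_le hP.1.1.ne_top h).symm

end Ideal

theorem burch_of_dim_pos_dim_zero_general
    {R : Type*} [CommRing R] [IsLocalRing R] [IsNoetherianRing R] (I J : Ideal R)
    (hdimI : 0 < ringKrullDim (R ⧸ I)) (hdimJ : ringKrullDim (R ⧸ J) = 0) :
    ((I + J * maximalIdeal R) * maximalIdeal R).colon (maximalIdeal R) ≠
      (I + J * maximalIdeal R).colon (maximalIdeal R) := by
  change (I + J * maximalIdeal R).IsBurch
  by_contra hnot
  obtain ⟨n, hn⟩ := Ideal.exists_pow_le_of_le_radical_of_fg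
    ((Ideal.ringKrullDim_quotient_nonpos_iff J).mp hdimJ.le) (IsNoetherian.noetherian _)
  have hpow : maximalIdeal R ^ (n + 1) ≤ I :=
    (Ideal.mul_mono_left hn).trans (Ideal.mul_maximalIdeal_le_of_not_isBurch hnot)
  refine hdimI.not_ge ((Ideal.ringKrullDim_quotient_nonpos_iff I).mpr fun x hx => ?_)
  exact ⟨n + 1, hpow (Ideal.pow_mem_pow hx _)⟩

/-- Let `(R,m)` be a Noetherian local ring and `I, J` proper ideals with `dim R/I > 0` and
`dim R/J = 0`. Then `I + Jm` is Burch, i.e. `(I + Jm)m : m ≠ (I + Jm) : m`. -/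
theorem burch_of_dim_pos_dim_zero
    {R : Type*} [CommRing R] [IsLocalRing R] [IsNoetherianRing R] (I J : Ideal R)
    (hI : I ≠ ⊤) (hJ : J ≠ ⊤)
    (hdimI : 0 < ringKrullDim (R ⧸ I)) (hdimJ : ringKrullDim (R ⧸ J) = 0) :
    ((I + J * maximalIdeal R) * maximalIdeal R).colon (maximalIdeal R) ≠
      (I + J * maximalIdeal R).colon (maximalIdeal R) :=
  burch_of_dim_pos_dim_zero_general I J hdimI hdimJ
end

section
/- Let (R,m) be a Noetherian local domain, let f ∈ R be a nonzero element, let J be an ideal of R, and let x ∈ m be an element whose image in R/fR is a nonzerodivisor. Then m(fJ) : x = fJ if and only if mJ : x = J. -/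
open IsLocalRing

namespace Ideal

variable {R : Type*} [CommRing R] [IsDomain R]

theorem span_singleton_mul_colon_span_singleton {f x : R} (hf : f ≠ 0)
    (hreg : ∀ r : R, x * r ∈ span {f} → r ∈ span {f}) (I : Ideal R) :
    (span {f} * I).colon (span {x}) = span {f} * I.colon (span {x}) := by
  ext r
  simp only [mem_colon_span_singleton, mem_span_singleton_mul]
  constructor
  · rintro ⟨z, hz, hfz⟩
    obtain ⟨s, rfl⟩ := mem_span_singleton'.mp <|
      hreg r (mem_span_singleton'.mpr ⟨z, by rw [mul_comm, hfz, mul_comm]⟩)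
    have hzs : z = s * x := mul_left_cancel₀ hf (by rw [hfz]; ring)
    exact ⟨s, hzs ▸ hz, mul_comm f s⟩
  · rintro ⟨s, hs, rfl⟩
    exact ⟨s * x, hs, by ring⟩

end Ideal

theorem mfull_mul_principal_iff_general
    {R : Type*} [CommRing R] [IsDomain R] [IsLocalRing R]
    (f : R) (hf : f ≠ 0) (J : Ideal R) (x : R)
    (hreg : ∀ r : R, x * r ∈ Ideal.span {f} → r ∈ Ideal.span {f}) :
    (maximalIdeal R * (Ideal.span {f} * J)).colon (Ideal.span {x}) = Ideal.span {f} * J ↔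
      (maximalIdeal R * J).colon (Ideal.span {x}) = J := by
  rw [mul_left_comm, Ideal.span_singleton_mul_colon_span_singleton hf hreg,
    Ideal.span_singleton_mul_right_inj hf]

/-- Let `(R,m)` be a Noetherian local domain, `f ≠ 0`, `J` an ideal, and `x ∈ m` whose image
in `R/fR` is a nonzerodivisor. Then `m(fJ) : x = fJ` iff `mJ : x = J`. -/
theorem mfull_mul_principal_iff
    {R : Type*} [CommRing R] [IsDomain R] [IsLocalRing R] [IsNoetherianRing R]
    (f : R) (hf : f ≠ 0) (J : Ideal R) (x : R) (hx : x ∈ maximalIdeal R)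
    (hreg : ∀ r : R, x * r ∈ Ideal.span {f} → r ∈ Ideal.span {f}) :
    (maximalIdeal R * (Ideal.span {f} * J)).colon (Ideal.span {x}) = Ideal.span {f} * J ↔
      (maximalIdeal R * J).colon (Ideal.span {x}) = J :=
  mfull_mul_principal_iff_general f hf J x hreg
end

section
/- Let (R,m) be a two-dimensional regular local ring and let I, J be nonzero proper ideals with ord(I∩J) = max{ord(I), ord(J)}. Let x ∈ m be a nonzero element such that length(R/(I+xR)) = ord(I), length(R/(J+xR)) = ord(J), length(R/((I∩J)+xR)) = ord(I∩J), length(R/((I+J)+xR)) = ord(I+J), and such that I : x = I : m and J : x = J : m. Then (I+J) : x = (I+J) : m, i.e. I + J is full with respect to x. -/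
open IsLocalRing

/-- The length of an `R`-module `M`, as the Krull dimension of its lattice of submodules
(the supremum of lengths of chains of submodules). -/
noncomputable def moduleLength (R M : Type*) [CommRing R] [AddCommGroup M] [Module R M] :
    WithBot ℕ∞ :=
  Order.krullDim (Submodule R M)

/-!
Put `P = I + xR`, `Q = J + xR`. The exact sequence
`0 → R/(P ∩ Q) → R/P × R/Q → R/(P + Q) → 0` gives
`ℓ(R/(P ∩ Q)) = ord I + ord J - ord (I + J) ≥ max (ord I) (ord J) = ℓ(R/(I ∩ J + xR))`,
and since `I ∩ J + xR ⊆ P ∩ Q` has finite colength, the two ideals coincide.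
Now if `r x = a + b` with `a ∈ I`, `b ∈ J`, then `a ∈ P ∩ Q = I ∩ J + xR`, say `a = c + s x`;
hence `s x ∈ I` and `(r - s) x ∈ J`, so `r ∈ (I : x) + (J : x) = (I : m) + (J : m) ⊆ (I + J) : m`.
-/

lemma moduleLength_eq_length (R M : Type*) [CommRing R] [AddCommGroup M] [Module R M] :
    moduleLength R M = Module.length R M :=
  (Module.coe_length R M).symm

namespace Submodule

section Length

variable {R M : Type*} [Ring R] [AddCommGroup M] [Module R M]

theorem length_quotient_inf_add_length_quotient_sup (p q : Submodule R M) :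
    Module.length R (M ⧸ p ⊓ q) + Module.length R (M ⧸ p ⊔ q) =
      Module.length R (M ⧸ p) + Module.length R (M ⧸ q) := by
  let f : M ⧸ p ⊓ q →ₗ[R] (M ⧸ p) × (M ⧸ q) :=
    (factor inf_le_left).prod (factor inf_le_right)
  let g : (M ⧸ p) × (M ⧸ q) →ₗ[R] M ⧸ p ⊔ q :=
    (factor le_sup_left).coprod (-factor le_sup_right)
  have hf_mk (m : M) : f (Quotient.mk m) = (Quotient.mk m, Quotient.mk m) := rfl
  have hg_mk (a b : M) : g (Quotient.mk a, Quotient.mk b) = Quotient.mk (a - b) := by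
    simp [g, sub_eq_add_neg]
  have hf : Function.Injective f := by
    rw [← LinearMap.ker_eq_bot, eq_bot_iff]
    intro y hy
    obtain ⟨m, rfl⟩ := Quotient.mk_surjective _ y
    rw [LinearMap.mem_ker, hf_mk, Prod.mk_eq_zero, Quotient.mk_eq_zero, Quotient.mk_eq_zero] at hy
    exact (Quotient.mk_eq_zero _).mpr hy
  have hg : Function.Surjective g := by
    intro y
    obtain ⟨m, rfl⟩ := Quotient.mk_surjective _ y
    exact ⟨(Quotient.mk m, 0), by simpa using hg_mk m 0⟩
  have hfg : Function.Exact f g := by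
    rintro ⟨y, z⟩
    obtain ⟨a, rfl⟩ := Quotient.mk_surjective _ y
    obtain ⟨b, rfl⟩ := Quotient.mk_surjective _ z
    rw [hg_mk, Quotient.mk_eq_zero]
    constructor
    · intro hab
      obtain ⟨u, hu, v, hv, huv⟩ := mem_sup.mp hab
      refine ⟨Quotient.mk (a - u), ?_⟩
      rw [hf_mk, Prod.mk.injEq, Quotient.eq, Quotient.eq]
      exact ⟨by simpa using hu, by rwa [show a - u - b = v by rw [eq_sub_of_add_eq' huv]; abel]⟩
    · rintro ⟨c, hc⟩
      obtain ⟨c, rfl⟩ := Quotient.mk_surjective _ c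
      rw [hf_mk, Prod.mk.injEq, Quotient.eq, Quotient.eq] at hc
      simpa using sub_mem (mem_sup_right hc.2) (mem_sup_left hc.1 : c - a ∈ p ⊔ q)
  exact (Module.length_eq_add_of_exact f g hf hg hfg).symm.trans (Module.length_prod R _ _)

theorem eq_of_le_of_length_quotient_le {N N' : Submodule R M} (hle : N ≤ N')
    (hlen : Module.length R (M ⧸ N) ≤ Module.length R (M ⧸ N'))
    (hfin : Module.length R (M ⧸ N) ≠ ⊤) : N = N' := by
  simp only [Module.length_quotient] at hlen hfin
  by_contra hne
  have hfin' : Order.coheight N' < ⊤ :=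
    (Order.coheight_anti hle).trans_lt (lt_top_iff_ne_top.mpr hfin)
  exact (Order.coheight_strictAnti (lt_of_le_of_ne hle hne) hfin').not_ge hlen

end Length

section Colon

variable {R M : Type*} [CommRing R] [AddCommGroup M] [Module R M]

theorem colon_sup_singleton_le {N₁ N₂ : Submodule R M} {x : M}
    (h : (N₁ ⊔ R ∙ x) ⊓ (N₂ ⊔ R ∙ x) ≤ N₁ ⊓ N₂ ⊔ R ∙ x) :
    (N₁ ⊔ N₂).colon {x} ≤ N₁.colon {x} ⊔ N₂.colon {x} := by
  intro r hr
  obtain ⟨a, ha, b, hb, hab⟩ := mem_sup.mp (mem_colon_singleton.mp hr)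
  have haQ : a ∈ N₂ ⊔ R ∙ x := by
    rw [show a = r • x + -b by rw [← hab]; abel]
    exact add_mem (mem_sup_right (smul_mem _ r (mem_span_singleton_self x)))
      (mem_sup_left (neg_mem hb))
  obtain ⟨c, hc, y, hy, hcy⟩ := mem_sup.mp (h ⟨mem_sup_left ha, haQ⟩)
  obtain ⟨s, rfl⟩ := mem_span_singleton.mp hy
  have hs : s • x ∈ N₁ := by
    rw [show s • x = a - c by rw [← hcy]; abel]
    exact sub_mem ha hc.1
  have hrs : (r - s) • x ∈ N₂ := by
    rw [show (r - s) • x = b + c by rw [sub_smul, ← hab, ← hcy]; abel]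
    exact add_mem hb hc.2
  rw [show r = s + (r - s) by abel]
  exact add_mem_sup (mem_colon_singleton.mpr hs) (mem_colon_singleton.mpr hrs)

theorem sup_colon_le (N₁ N₂ : Submodule R M) (S : Set M) :
    N₁.colon S ⊔ N₂.colon S ≤ (N₁ ⊔ N₂).colon S :=
  sup_le (colon_mono le_sup_left subset_rfl) (colon_mono le_sup_right subset_rfl)

end Colon

end Submodule

theorem Ideal.le_of_le_pow_of_not_le_pow_succ {R : Type*} [CommSemiring R] {I K : Ideal R}
    {a b : ℕ} (ha : I ≤ K ^ a) (hb : ¬ I ≤ K ^ (b + 1)) : a ≤ b := by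
  by_contra! hab
  exact hb (ha.trans (Ideal.pow_le_pow_right hab))

theorem full_add_of_full_general
    {R : Type*} [CommRing R] [IsLocalRing R]
    (I J : Ideal R)
    (oI oJ oIJ oIpJ : ℕ)
    (hoI' : ¬ I ≤ maximalIdeal R ^ (oI + 1))
    (hoJ' : ¬ J ≤ maximalIdeal R ^ (oJ + 1))
    (hoIpJ : I + J ≤ maximalIdeal R ^ oIpJ)
    (hord : oIJ = max oI oJ)
    (x : R) (hx : x ∈ maximalIdeal R)
    (hlI : moduleLength R (R ⧸ (I + Ideal.span {x})) = (oI : ℕ∞))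
    (hlJ : moduleLength R (R ⧸ (J + Ideal.span {x})) = (oJ : ℕ∞))
    (hlIJ : moduleLength R (R ⧸ (I ⊓ J + Ideal.span {x})) = (oIJ : ℕ∞))
    (hlIpJ : moduleLength R (R ⧸ (I + J + Ideal.span {x})) = (oIpJ : ℕ∞))
    (hIfull : I.colon (Ideal.span {x}) = I.colon (maximalIdeal R))
    (hJfull : J.colon (Ideal.span {x}) = J.colon (maximalIdeal R)) :
    (I + J).colon (Ideal.span {x}) = (I + J).colon (maximalIdeal R) := by
  simp only [moduleLength_eq_length, WithBot.coe_inj] at hlI hlJ hlIJ hlIpJ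
  have hI := Ideal.le_of_le_pow_of_not_le_pow_succ (le_sup_left.trans hoIpJ) hoI'
  have hJ := Ideal.le_of_le_pow_of_not_le_pow_succ (le_sup_right.trans hoIpJ) hoJ'
  have hMV := Submodule.length_quotient_inf_add_length_quotient_sup
    (I + Ideal.span {x}) (J + Ideal.span {x})
  have hsup : (I + Ideal.span {x}) ⊔ (J + Ideal.span {x}) = I + J + Ideal.span {x} :=
    (sup_sup_distrib_right I J _).symm
  rw [hlI, hlJ, hsup, hlIpJ] at hMV
  have hinf : I ⊓ J + Ideal.span {x} = (I + Ideal.span {x}) ⊓ (J + Ideal.span {x}) := by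
    refine Submodule.eq_of_le_of_length_quotient_le (N := I ⊓ J + Ideal.span {x})
      (le_inf (sup_le_sup_right inf_le_left _) (sup_le_sup_right inf_le_right _)) ?_
      (hlIJ ▸ ENat.natCast_ne_top oIJ)
    rw [hlIJ]
    generalize Module.length R (R ⧸ (I + Ideal.span {x}) ⊓ (J + Ideal.span {x})) = L at hMV
    induction L using ENat.recTopCoe with
    | top => exact le_top
    | coe n => norm_cast at hMV ⊢; omega
  refine le_antisymm ?_ (Submodule.colon_mono le_rfl (Ideal.span_le.mpr (Set.singleton_subset_iff.mpr hx)))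
  calc (I + J).colon (Ideal.span {x}) ≤ I.colon {x} ⊔ J.colon {x} := by
        rw [Ideal.colon_span]
        exact Submodule.colon_sup_singleton_le hinf.ge
    _ = I.colon (maximalIdeal R) ⊔ J.colon (maximalIdeal R) := by
        rw [← Ideal.colon_span, ← Ideal.colon_span (S := {x}), hIfull, hJfull]
    _ ≤ (I + J).colon (maximalIdeal R) := Submodule.sup_colon_le I J _

/-- Let `(R,m)` be a two-dimensional regular local ring and `I, J` nonzero proper ideals with
`ord(I∩J) = max{ord I, ord J}`. Let `x ∈ m` be a nonzero element satisfying the generic length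
conditions and such that `I : x = I : m` and `J : x = J : m` (i.e. `I` and `J` are full with
respect to `x`). Then `(I+J) : x = (I+J) : m`, i.e. `I + J` is full with respect to `x`. -/
theorem full_add_of_full
    {R : Type*} [CommRing R] [IsLocalRing R] [IsNoetherianRing R]
    (hreg : ∃ u v : R, maximalIdeal R = Ideal.span {u, v})
    (hdim : ringKrullDim R = 2)
    (I J : Ideal R) (hI0 : I ≠ ⊥) (hI1 : I ≠ ⊤) (hJ0 : J ≠ ⊥) (hJ1 : J ≠ ⊤)
    (oI oJ oIJ oIpJ : ℕ)
    (hoI : I ≤ maximalIdeal R ^ oI) (hoI' : ¬ I ≤ maximalIdeal R ^ (oI + 1))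
    (hoJ : J ≤ maximalIdeal R ^ oJ) (hoJ' : ¬ J ≤ maximalIdeal R ^ (oJ + 1))
    (hoIJ : I ⊓ J ≤ maximalIdeal R ^ oIJ)
    (hoIJ' : ¬ I ⊓ J ≤ maximalIdeal R ^ (oIJ + 1))
    (hoIpJ : I + J ≤ maximalIdeal R ^ oIpJ)
    (hoIpJ' : ¬ I + J ≤ maximalIdeal R ^ (oIpJ + 1))
    (hord : oIJ = max oI oJ)
    (x : R) (hx0 : x ≠ 0) (hx : x ∈ maximalIdeal R)
    (hlI : moduleLength R (R ⧸ (I + Ideal.span {x})) = (oI : ℕ∞))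
    (hlJ : moduleLength R (R ⧸ (J + Ideal.span {x})) = (oJ : ℕ∞))
    (hlIJ : moduleLength R (R ⧸ (I ⊓ J + Ideal.span {x})) = (oIJ : ℕ∞))
    (hlIpJ : moduleLength R (R ⧸ (I + J + Ideal.span {x})) = (oIpJ : ℕ∞))
    (hIfull : I.colon (Ideal.span {x}) = I.colon (maximalIdeal R))
    (hJfull : J.colon (Ideal.span {x}) = J.colon (maximalIdeal R)) :
    (I + J).colon (Ideal.span {x}) = (I + J).colon (maximalIdeal R) :=
  full_add_of_full_general I J oI oJ oIJ oIpJ hoI' hoJ' hoIpJ hord x hx hlI hlJ hlIJ hlIpJ hIfull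
    hJfull
end
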